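/- arXiv:1901.01953 — 2 statements merged into one kernel-verified Lean document; each statement's English description precedes it below -/
import Mathlib

section
/- Let c be an arc-length parametrized C² curve in ℝ³ and let e : ℝ → ℝ³ solve the ODE ∂_s e(s) = -(c''(s)·e(s)) c'(s) with initial condition e(0) orthogonal to c'(0) and |e(0)| = 1. Then for all s, e(s)·c'(s) = 0 and |e(s)| = 1. -/
open scoped RealInnerProductSpace

theorem frame_vector_orthogonal_unit
    (c : ℝ → EuclideanSpace ℝ (Fin 3))
    (hc : ContDiff ℝ 2 c)
    (hunit : ∀ s, ‖deriv c s‖ = 1)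
    (e : ℝ → EuclideanSpace ℝ (Fin 3))
    (he : ∀ s, HasDerivAt e (-(⟪deriv (deriv c) s, e s⟫) • deriv c s) s)
    (h0 : ⟪e 0, deriv c 0⟫ = 0)
    (hn0 : ‖e 0‖ = 1) :
    ∀ s : ℝ, ⟪e s, deriv c s⟫ = 0 ∧ ‖e s‖ = 1 := by
  have hc' : ∀ s, HasDerivAt (deriv c) (deriv (deriv c) s) s := by
    intro s
    have h2 : ContDiff ℝ (1+1) c := by norm_num at hc ⊢; exact hc
    have h1 : ContDiff ℝ 1 (deriv c) := (contDiff_succ_iff_deriv.mp h2).2.2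
    exact (h1.differentiable one_ne_zero s).hasDerivAt
  have hcc : ∀ s, ⟪deriv c s, deriv c s⟫ = 1 := by
    intro s
    rw [real_inner_self_eq_norm_sq, hunit s]; norm_num
  -- F s = ⟪e s, c' s⟫ has derivative 0
  have hF : ∀ s, HasDerivAt (fun s => ⟪e s, deriv c s⟫) 0 s := by
    intro s
    have := (he s).inner ℝ (hc' s)
    have heq : ⟪e s, deriv (deriv c) s⟫ +
        ⟪-(⟪deriv (deriv c) s, e s⟫) • deriv c s, deriv c s⟫ = 0 := by
      rw [inner_smul_left, hcc s, real_inner_comm (e s)]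
      simp [starRingEnd_apply]
    rwa [heq] at this
  have hFconst : ∀ s, ⟪e s, deriv c s⟫ = 0 := by
    intro s
    have : (fun s => ⟪e s, deriv c s⟫) s = (fun s => ⟪e s, deriv c s⟫) 0 := by
      apply is_const_of_deriv_eq_zero (fun t => (hF t).differentiableAt)
      intro t; exact (hF t).deriv
    simpa [h0] using this
  intro s
  refine ⟨hFconst s, ?_⟩
  -- G s = ⟪e s, e s⟫ has derivative 0
  have hG : ∀ s, HasDerivAt (fun s => ⟪e s, e s⟫) 0 s := by
    intro s
    have := (he s).inner ℝ (he s)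
    have heq : ⟪e s, -(⟪deriv (deriv c) s, e s⟫) • deriv c s⟫ +
        ⟪-(⟪deriv (deriv c) s, e s⟫) • deriv c s, e s⟫ = 0 := by
      have h1 : ⟪e s, deriv c s⟫ = 0 := hFconst s
      have h2 : ⟪deriv c s, e s⟫ = 0 := by rw [real_inner_comm]; exact h1
      rw [inner_smul_left, inner_smul_right, h1, h2]
      simp
    rwa [heq] at this
  have hGconst : ⟪e s, e s⟫ = 1 := by
    have : (fun s => ⟪e s, e s⟫) s = (fun s => ⟪e s, e s⟫) 0 := by
      apply is_const_of_deriv_eq_zero (fun t => (hG t).differentiableAt)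
      intro t; exact (hG t).deriv
    simp only at this
    rw [this, real_inner_self_eq_norm_sq, hn0]; norm_num
  have := real_inner_self_eq_norm_sq (e s)
  rw [hGconst] at this
  nlinarith [norm_nonneg (e s)]
end

section
/- Let β(η,θ,s) > 0 and define, for a C¹ vector field w = w₁e₁ + w₂e₂ + w₃c' on the curved pipe, the rescaled field ŵ with components ŵ₁ = h⁻¹βw₁, ŵ₂ = h⁻¹βw₂, ŵ₃ = w₃. Then the three-dimensional divergence in curvilinear coordinates satisfies ∇_x·w = β⁻¹(∂_ηŵ₁ + η⁻¹ŵ₁ + η⁻¹∂_θŵ₂ + ∂_sŵ₃), i.e., β ∇_x·w equals the divergence of ŵ computed as in a straight cylinder in cylindrical coordinates (η,θ,s). -/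
open scoped RealInnerProductSpace

theorem curvilinear_divergence_identity
    (h η θ s : ℝ) (hh : 0 < h) (hη : 0 < η)
    (c : ℝ → EuclideanSpace ℝ (Fin 3)) (hc : ContDiff ℝ 2 c)
    (hunit : ∀ t, ‖deriv c t‖ = 1)
    (e₁ e₂ : ℝ → ℝ → EuclideanSpace ℝ (Fin 3))
    -- orthonormality of the moving frame {e₁, e₂, c'}:
    (hn1 : ∀ b t, ‖e₁ b t‖ = 1) (hn2 : ∀ b t, ‖e₂ b t‖ = 1)
    (ho12 : ∀ b t, ⟪e₁ b t, e₂ b t⟫ = 0)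
    (ho13 : ∀ b t, ⟪e₁ b t, deriv c t⟫ = 0)
    (ho23 : ∀ b t, ⟪e₂ b t, deriv c t⟫ = 0)
    -- evolution of the frame:
    (hθ1 : ∀ b t, HasDerivAt (fun τ => e₁ τ t) (e₂ b t) b)
    (hθ2 : ∀ b t, HasDerivAt (fun τ => e₂ τ t) (-e₁ b t) b)
    (hs1 : ∀ b t, HasDerivAt (fun τ => e₁ b τ)
      (-(⟪deriv (deriv c) t, e₁ b t⟫) • deriv c t) t)
    (hs2 : ∀ b t, HasDerivAt (fun τ => e₂ b τ)
      (-(⟪deriv (deriv c) t, e₂ b t⟫) • deriv c t) t)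
    -- the scale factor β = 1 - hη c''·e₁ > 0:
    (β : ℝ → ℝ → ℝ → ℝ)
    (hβ : ∀ a b t, β a b t = 1 - h * a * ⟪deriv (deriv c) t, e₁ b t⟫)
    (hβpos : 0 < β η θ s)
    -- the vector field w = w₁e₁ + w₂e₂ + w₃c' :
    (w₁ w₂ w₃ : ℝ → ℝ → ℝ → ℝ)
    (W : ℝ → ℝ → ℝ → EuclideanSpace ℝ (Fin 3))
    (hW : ∀ a b t, W a b t = w₁ a b t • e₁ b t + w₂ a b t • e₂ b t + w₃ a b t • deriv c t)
    -- differentiability of the components: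
    (hd1η : DifferentiableAt ℝ (fun t => w₁ t θ s) η)
    (hd2η : DifferentiableAt ℝ (fun t => w₂ t θ s) η)
    (hd3η : DifferentiableAt ℝ (fun t => w₃ t θ s) η)
    (hd1θ : DifferentiableAt ℝ (fun t => w₁ η t s) θ)
    (hd2θ : DifferentiableAt ℝ (fun t => w₂ η t s) θ)
    (hd3θ : DifferentiableAt ℝ (fun t => w₃ η t s) θ)
    (hd1s : DifferentiableAt ℝ (fun t => w₁ η θ t) s)
    (hd2s : DifferentiableAt ℝ (fun t => w₂ η θ t) s)
    (hd3s : DifferentiableAt ℝ (fun t => w₃ η θ t) s) :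
    -- β ∇_x·w  equals the straight-cylinder divergence of ŵ = (h⁻¹βw₁, h⁻¹βw₂, w₃):
    ⟪e₁ θ s, h⁻¹ • deriv (fun t => W t θ s) η⟫
      + ⟪e₂ θ s, (h * η)⁻¹ • deriv (fun t => W η t s) θ⟫
      + (β η θ s)⁻¹ * ⟪deriv c s, deriv (fun t => W η θ t) s⟫
    = (β η θ s)⁻¹ *
        (deriv (fun t => h⁻¹ * β t θ s * w₁ t θ s) η
          + η⁻¹ * (h⁻¹ * β η θ s * w₁ η θ s)
          + η⁻¹ * deriv (fun t => h⁻¹ * β η t s * w₂ η t s) θ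
          + deriv (fun t => w₃ η θ t) s) := by
  -- curvature components at (θ, s)
  set K₁ : ℝ := ⟪deriv (deriv c) s, e₁ θ s⟫ with hK₁
  set K₂ : ℝ := ⟪deriv (deriv c) s, e₂ θ s⟫ with hK₂
  have hh' : h ≠ 0 := ne_of_gt hh
  have hη' : η ≠ 0 := ne_of_gt hη
  -- deriv c is differentiable
  have hcd : ContDiff ℝ (1 + 1) c := by norm_num; exact hc
  have hc1 : Differentiable ℝ (deriv c) :=
    ((contDiff_succ_iff_deriv.mp hcd).2.2).differentiable one_ne_zero
  have hc'' : HasDerivAt (deriv c) (deriv (deriv c) s) s := (hc1 s).hasDerivAt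
  -- orthogonality of c' and c''
  have i33 : ⟪deriv c s, deriv c s⟫ = 1 := by
    rw [real_inner_self_eq_norm_sq, hunit]; norm_num
  have hcc : ⟪deriv c s, deriv (deriv c) s⟫ = 0 := by
    have hd := (hc''.inner ℝ hc'')
    have heq : (fun t => ⟪deriv c t, deriv c t⟫) = fun _ : ℝ => (1 : ℝ) := by
      funext t; rw [real_inner_self_eq_norm_sq, hunit]; norm_num
    rw [heq] at hd
    have h0 := hd.unique (hasDerivAt_const _ _)
    have hcomm : ⟪deriv (deriv c) s, deriv c s⟫ = ⟪deriv c s, deriv (deriv c) s⟫ :=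
      real_inner_comm _ _
    linarith
  -- basic inner products
  have i11 : ⟪e₁ θ s, e₁ θ s⟫ = 1 := by rw [real_inner_self_eq_norm_sq, hn1]; norm_num
  have i22 : ⟪e₂ θ s, e₂ θ s⟫ = 1 := by rw [real_inner_self_eq_norm_sq, hn2]; norm_num
  have i21 : ⟪e₂ θ s, e₁ θ s⟫ = 0 := by rw [real_inner_comm]; exact ho12 θ s
  have i31 : ⟪deriv c s, e₁ θ s⟫ = 0 := by rw [real_inner_comm]; exact ho13 θ s
  have i32 : ⟪deriv c s, e₂ θ s⟫ = 0 := by rw [real_inner_comm]; exact ho23 θ s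
  -- component derivatives
  set d1η := deriv (fun t => w₁ t θ s) η
  set d2θ := deriv (fun t => w₂ η t s) θ
  set d3s := deriv (fun t => w₃ η θ t) s
  -- η-derivative of W
  have hWη : HasDerivAt (fun t => W t θ s)
      (d1η • e₁ θ s + deriv (fun t => w₂ t θ s) η • e₂ θ s
        + deriv (fun t => w₃ t θ s) η • deriv c s) η := by
    have hfun : (fun t => W t θ s)
        = fun t => w₁ t θ s • e₁ θ s + w₂ t θ s • e₂ θ s + w₃ t θ s • deriv c s :=
      funext fun t => hW t θ s
    rw [hfun]
    exact ((hd1η.hasDerivAt.smul_const _).add (hd2η.hasDerivAt.smul_const _)).add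
      (hd3η.hasDerivAt.smul_const _)
  -- θ-derivative of W
  have hWθ : HasDerivAt (fun t => W η t s)
      ((w₁ η θ s • e₂ θ s + deriv (fun t => w₁ η t s) θ • e₁ θ s)
        + (w₂ η θ s • (-e₁ θ s) + d2θ • e₂ θ s)
        + deriv (fun t => w₃ η t s) θ • deriv c s) θ := by
    have hfun : (fun t => W η t s)
        = fun t => w₁ η t s • e₁ t s + w₂ η t s • e₂ t s + w₃ η t s • deriv c s :=
      funext fun t => hW η t s
    rw [hfun]
    exact ((hd1θ.hasDerivAt.smul (hθ1 θ s)).add (hd2θ.hasDerivAt.smul (hθ2 θ s))).add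
      (hd3θ.hasDerivAt.smul_const _)
  -- s-derivative of W
  have hWs : HasDerivAt (fun t => W η θ t)
      ((w₁ η θ s • (-(K₁) • deriv c s) + deriv (fun t => w₁ η θ t) s • e₁ θ s)
        + (w₂ η θ s • (-(K₂) • deriv c s) + deriv (fun t => w₂ η θ t) s • e₂ θ s)
        + (w₃ η θ s • deriv (deriv c) s + d3s • deriv c s)) s := by
    have hfun : (fun t => W η θ t)
        = fun t => w₁ η θ t • e₁ θ t + w₂ η θ t • e₂ θ t + w₃ η θ t • deriv c t :=
      funext fun t => hW η θ t
    rw [hfun]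
    exact ((hd1s.hasDerivAt.smul (hs1 θ s)).add (hd2s.hasDerivAt.smul (hs2 θ s))).add
      (hd3s.hasDerivAt.smul hc'')
  -- RHS η-derivative
  have hBη : HasDerivAt (fun t => h⁻¹ * β t θ s * w₁ t θ s)
      ((h⁻¹ * (0 - (h * 1 * K₁))) * w₁ η θ s + (h⁻¹ * β η θ s) * d1η) η := by
    have hfun : (fun t => h⁻¹ * β t θ s * w₁ t θ s)
        = fun t => (h⁻¹ * (1 - h * t * K₁)) * w₁ t θ s := by
      funext t; rw [hβ]
    rw [hfun, hβ]
    exact ((((hasDerivAt_const η 1).sub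
      (((hasDerivAt_id η).const_mul h).mul_const K₁)).const_mul h⁻¹).mul hd1η.hasDerivAt)
  -- RHS θ-derivative
  have hK : HasDerivAt (fun t => ⟪deriv (deriv c) s, e₁ t s⟫) K₂ θ := by
    have := (hasDerivAt_const θ (deriv (deriv c) s)).inner ℝ (hθ1 θ s)
    simpa [hK₂] using this
  have hBθ : HasDerivAt (fun t => h⁻¹ * β η t s * w₂ η t s)
      ((h⁻¹ * (0 - (h * η * K₂))) * w₂ η θ s + (h⁻¹ * β η θ s) * d2θ) θ := by
    have hfun : (fun t => h⁻¹ * β η t s * w₂ η t s)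
        = fun t => (h⁻¹ * (1 - h * η * ⟪deriv (deriv c) s, e₁ t s⟫)) * w₂ η t s := by
      funext t; rw [hβ]
    rw [hfun, hβ]
    exact ((((hasDerivAt_const θ 1).sub
      (hK.const_mul (h * η))).const_mul h⁻¹).mul hd2θ.hasDerivAt)
  -- substitute all derivatives
  rw [hWη.deriv, hWθ.deriv, hWs.deriv, hBη.deriv, hBθ.deriv]
  have hB : β η θ s = 1 - h * η * K₁ := hβ η θ s
  have hB' : β η θ s ≠ 0 := ne_of_gt hβpos
  simp only [inner_add_right, real_inner_smul_right, inner_neg_right, i11, i22, i21, i31,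
    i32, i33, ho12, ho13, ho23, hcc, smul_neg, neg_smul]
  field_simp
  ring
end
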